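/- Let x and x' be nonzero elements of L such that Exc(x) fails, Exc(x') fails, and v(phi(x)) = v(phi(x')) (equality in Z union {+infinity}). Then v(x) = v(x'). (Lemma 2.9 of the paper: there are no two elements with different valuations, both outside the exceptional set, whose images under phi have equal valuation.) -/

import Mathlib

open Filter Topology Finset

universe u

section Drinfeld

variable {L : Type u} [Field L] {k : Type*} [Field k]

/-- The integer value of the valuation `v` at `y` (junk value `0` at `y = 0`). -/
noncomputable def vz (v : L → WithTop ℤ) (y : L) : ℤ := (v y).untopD 0

/-- `v : L → ℤ ∪ {∞}` is a normalized discrete valuation: `v 0 = ∞`, `v` is finite and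
surjective onto `ℤ` on nonzero elements, `v (x * y) = v x + v y` and
`v (x + y) ≥ min (v x) (v y)`. -/
structure IsDVal (v : L → WithTop ℤ) : Prop where
  map_zero : v 0 = ⊤
  ne_top : ∀ x : L, x ≠ 0 → v x ≠ ⊤
  map_mul : ∀ x y : L, v (x * y) = v x + v y
  add_min : ∀ x y : L, min (v x) (v y) ≤ v (x + y)
  surj : ∀ n : ℤ, ∃ x : L, v x = (n : WithTop ℤ)

/-- `res : L → k` restricted to the valuation ring of `v` is the quotient map onto the
residue field `k` of `v`. -/
structure IsResidue (v : L → WithTop ℤ) (res : L → k) : Prop where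
  map_one : res 1 = 1
  map_add : ∀ x y : L, 0 ≤ v x → 0 ≤ v y → res (x + y) = res x + res y
  map_mul : ∀ x y : L, 0 ≤ v x → 0 ≤ v y → res (x * y) = res x * res y
  eq_zero_iff : ∀ x : L, 0 ≤ v x → (res x = 0 ↔ 0 < v x)
  surj : ∀ c : k, ∃ x : L, 0 ≤ v x ∧ res x = c

/-- The angular component of `y` at `v`, with respect to the uniformizer `π` and the
residue map `res`: the residue of `y * π ^ (-v y)`. -/
noncomputable def ac (v : L → WithTop ℤ) (π : L) (res : L → k) (y : L) : k :=
  res (y * π ^ (-(vz v y)))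

/-- The `F_q`-linear map `φ(x) = ∑_{i=r₀}^{r} a i * x^(q^i)`. -/
noncomputable def phiMap (q r₀ r : ℕ) (a : ℕ → L) (x : L) : L :=
  ∑ i ∈ Finset.Icc r₀ r, a i * x ^ q ^ i

/-- The set `P_v ⊆ ℚ` of possible exceptional valuations:
`(v(a i) - v(a j))/(q^j - q^i)` for `r₀ ≤ i < j ≤ r` with `a i ≠ 0 ≠ a j`, together with `0`. -/
def Pset (q : ℕ) (v : L → WithTop ℤ) (r₀ r : ℕ) (a : ℕ → L) : Set ℚ :=
  {0} ∪ {α : ℚ | ∃ i j : ℕ, r₀ ≤ i ∧ i < j ∧ j ≤ r ∧ a i ≠ 0 ∧ a j ≠ 0 ∧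
      α = ((vz v (a i) : ℚ) - (vz v (a j) : ℚ)) / ((q : ℚ) ^ j - (q : ℚ) ^ i)}

/-- The set `J(α)` of indices where `v(a i) + q^i * α` attains its minimum. -/
def Jset (q : ℕ) (v : L → WithTop ℤ) (r₀ r : ℕ) (a : ℕ → L) (α : ℚ) : Set ℕ :=
  {i : ℕ | r₀ ≤ i ∧ i ≤ r ∧ a i ≠ 0 ∧
    ∀ j : ℕ, r₀ ≤ j → j ≤ r → a j ≠ 0 →
      (vz v (a i) : ℚ) + (q : ℚ) ^ i * α ≤ (vz v (a j) : ℚ) + (q : ℚ) ^ j * α}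

open scoped Classical in
/-- The set `R_v(α) ⊆ k_v`: `1` together with the nonzero roots of
`∑_{i ∈ J(α)} ac(a i) * X^(q^i)`. -/
noncomputable def Rset (q : ℕ) (v : L → WithTop ℤ) (π : L) (res : L → k)
    (r₀ r : ℕ) (a : ℕ → L) (α : ℚ) : Set k :=
  {1} ∪ {γ : k | γ ≠ 0 ∧
    ∑ i ∈ Finset.Icc r₀ r,
      (if i ∈ Jset q v r₀ r a α then ac v π res (a i) * γ ^ q ^ i else 0) = 0}

/-- The exceptional condition `Exc(y)`: `v y ∈ P_v` and `ac y ∈ R_v(v y)`. -/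
def Exc (q : ℕ) (v : L → WithTop ℤ) (π : L) (res : L → k)
    (r₀ r : ℕ) (a : ℕ → L) (y : L) : Prop :=
  ((vz v y : ℚ) ∈ Pset q v r₀ r a) ∧ ac v π res y ∈ Rset q v π res r₀ r a ((vz v y : ℚ))

/-- The sequence `min(0, v(φⁿ x)) / q^(r n)` whose limit is minus the local height of `x`. -/
noncomputable def locSeq (q r : ℕ) (v : L → WithTop ℤ) (φ : L → L) (x : L) (n : ℕ) : ℝ :=
  ((min 0 (vz v (φ^[n] x)) : ℤ) : ℝ) / (q : ℝ) ^ (r * n)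

/-!
For `y ≠ 0` with `v y = α`, the term `a i * y^(q^i)` of `φ y` has valuation `v(a i) + q^i α`.
Scaling `φ y` by `π^(-M)`, where `M` is the least of these valuations, its residue is
`∑_{i ∈ J(α)} ac(a i) * ac(y)^(q^i)`. This is nonzero unless `Exc y`: if `J(α)` is a singleton it
is a single nonzero monomial, and if two indices attain the minimum then `α ∈ P_v`. So for
non-exceptional `y`, `v(φ y) = min_i (v(a i) + q^i v(y))`, which is strictly increasing in `v(y)`.
-/

namespace IsDVal

variable {v : L → WithTop ℤ}

lemma coe_vz (hv : IsDVal v) {x : L} (hx : x ≠ 0) : ((vz v x : ℤ) : WithTop ℤ) = v x := by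
  obtain ⟨n, hn⟩ := WithTop.ne_top_iff_exists.mp (hv.ne_top x hx)
  simp [vz, ← hn]

lemma vz_mul (hv : IsDVal v) {x y : L} (hx : x ≠ 0) (hy : y ≠ 0) :
    vz v (x * y) = vz v x + vz v y := by
  have h := hv.map_mul x y
  rw [← hv.coe_vz (mul_ne_zero hx hy), ← hv.coe_vz hx, ← hv.coe_vz hy] at h
  exact_mod_cast h

lemma vz_one (hv : IsDVal v) : vz v (1 : L) = 0 := by
  have h := hv.vz_mul (one_ne_zero (α := L)) one_ne_zero
  rw [one_mul] at h
  omega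

lemma vz_pow (hv : IsDVal v) {x : L} (hx : x ≠ 0) (n : ℕ) : vz v (x ^ n) = n * vz v x := by
  induction n with
  | zero => simp [hv.vz_one]
  | succ n ih => rw [pow_succ, hv.vz_mul (pow_ne_zero n hx) hx, ih]; push_cast; ring

lemma vz_inv (hv : IsDVal v) {x : L} (hx : x ≠ 0) : vz v x⁻¹ = -vz v x := by
  have h := hv.vz_mul hx (inv_ne_zero hx)
  rw [mul_inv_cancel₀ hx, hv.vz_one] at h
  omega

lemma vz_zpow (hv : IsDVal v) {x : L} (hx : x ≠ 0) (t : ℤ) : vz v (x ^ t) = t * vz v x := by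
  cases t with
  | ofNat n => rw [Int.ofNat_eq_natCast, zpow_natCast, hv.vz_pow hx]
  | negSucc n =>
      rw [zpow_negSucc, hv.vz_inv (pow_ne_zero _ hx), hv.vz_pow hx, Int.negSucc_eq]
      push_cast; ring

lemma le_sum (hv : IsDVal v) {ι : Type*} (s : Finset ι) (f : ι → L) {c : WithTop ℤ}
    (h : ∀ i ∈ s, c ≤ v (f i)) : c ≤ v (∑ i ∈ s, f i) := by
  induction s using Finset.cons_induction with
  | empty => simp [hv.map_zero]
  | cons i s hi ih =>
      rw [Finset.sum_cons]
      exact le_trans (le_min (h i (mem_cons_self i s)) (ih fun j hj => h j (mem_cons_of_mem hj)))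
        (hv.add_min _ _)

lemma nonneg_pow (hv : IsDVal v) {x : L} (hx : 0 ≤ v x) (n : ℕ) : 0 ≤ v (x ^ n) := by
  induction n with
  | zero => simp [← hv.coe_vz one_ne_zero, hv.vz_one]
  | succ n ih => rw [pow_succ, hv.map_mul]; exact add_nonneg ih hx

variable {π : L}

lemma ne_zero_of_val_eq_one (hv : IsDVal v) (hπ : v π = 1) : π ≠ 0 := by
  rintro rfl
  simp [hv.map_zero] at hπ

lemma vz_zpow_of_val_eq_one (hv : IsDVal v) (hπ : v π = 1) (t : ℤ) : vz v (π ^ t) = t := by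
  have hπ0 := hv.ne_zero_of_val_eq_one hπ
  have h1 : vz v π = 1 := by
    have h := hv.coe_vz hπ0
    rw [hπ] at h
    exact_mod_cast h
  rw [hv.vz_zpow hπ0, h1, mul_one]

lemma vz_mul_pow_mul_zpow (hv : IsDVal v) (hπ : v π = 1) {a y : L} (ha : a ≠ 0) (hy : y ≠ 0)
    (n : ℕ) (t : ℤ) : vz v (a * y ^ n * π ^ t) = vz v a + n * vz v y + t := by
  have hπ0 := hv.ne_zero_of_val_eq_one hπ
  rw [hv.vz_mul (mul_ne_zero ha (pow_ne_zero n hy)) (zpow_ne_zero t hπ0),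
    hv.vz_mul ha (pow_ne_zero n hy), hv.vz_pow hy, hv.vz_zpow_of_val_eq_one hπ]

lemma val_mul_zpow_neg_vz (hv : IsDVal v) (hπ : v π = 1) {y : L} (hy : y ≠ 0) :
    v (y * π ^ (-vz v y)) = 0 := by
  have hπ0 := hv.ne_zero_of_val_eq_one hπ
  rw [← hv.coe_vz (mul_ne_zero hy (zpow_ne_zero _ hπ0)), hv.vz_mul hy (zpow_ne_zero _ hπ0),
    hv.vz_zpow_of_val_eq_one hπ, add_neg_cancel]
  rfl

end IsDVal

namespace IsResidue

variable {v : L → WithTop ℤ} {res : L → k}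

lemma map_zero (hres : IsResidue v res) (hv : IsDVal v) : res (0 : L) = 0 := by
  have h0 : 0 ≤ v 0 := by simp [hv.map_zero]
  simpa using (hres.map_add 0 0 h0 h0).symm

lemma map_pow (hres : IsResidue v res) (hv : IsDVal v) {x : L} (hx : 0 ≤ v x) (n : ℕ) :
    res (x ^ n) = res x ^ n := by
  induction n with
  | zero => simpa using hres.map_one
  | succ n ih => rw [pow_succ, pow_succ, ← ih, hres.map_mul _ _ (hv.nonneg_pow hx n) hx]

lemma map_sum (hres : IsResidue v res) (hv : IsDVal v) {ι : Type*} (s : Finset ι) (f : ι → L)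
    (h : ∀ i ∈ s, 0 ≤ v (f i)) : res (∑ i ∈ s, f i) = ∑ i ∈ s, res (f i) := by
  induction s using Finset.cons_induction with
  | empty => simpa using hres.map_zero hv
  | cons i s hi ih =>
      have hs : ∀ j ∈ s, 0 ≤ v (f j) := fun j hj => h j (mem_cons_of_mem hj)
      rw [sum_cons, sum_cons, hres.map_add _ _ (h i (mem_cons_self i s)) (hv.le_sum s f hs), ih hs]

lemma val_eq_zero_of_ne_zero (hres : IsResidue v res) {x : L} (hx : 0 ≤ v x) (h : res x ≠ 0) :
    v x = 0 :=
  le_antisymm (not_lt.mp fun hlt => h ((hres.eq_zero_iff x hx).mpr hlt)) hx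

variable {π : L}

lemma ac_ne_zero (hres : IsResidue v res) (hv : IsDVal v) (hπ : v π = 1) {y : L} (hy : y ≠ 0) :
    ac v π res y ≠ 0 := by
  have h0 := hv.val_mul_zpow_neg_vz hπ hy
  rw [ac, Ne, hres.eq_zero_iff _ h0.ge, h0]
  exact lt_irrefl 0

lemma val_eq_of_res_mul_zpow_ne_zero (hres : IsResidue v res) (hv : IsDVal v) (hπ : v π = 1)
    {w : L} {M : ℤ} (hw : 0 ≤ v (w * π ^ (-M))) (h : res (w * π ^ (-M)) ≠ 0) :
    v w = M := by
  have hπ0 := hv.ne_zero_of_val_eq_one hπ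
  have hwπ : w = w * π ^ (-M) * π ^ M := by
    rw [mul_assoc, ← zpow_add₀ hπ0, neg_add_cancel, zpow_zero, mul_one]
  rw [hwπ, hv.map_mul, hres.val_eq_zero_of_ne_zero hw h, zero_add,
    ← hv.coe_vz (zpow_ne_zero M hπ0), hv.vz_zpow_of_val_eq_one hπ]

lemma res_mul_pow_mul_zpow (hres : IsResidue v res) (hv : IsDVal v) (hπ : v π = 1) {a y : L}
    (ha : a ≠ 0) (hy : y ≠ 0) (n : ℕ) :
    res (a * y ^ n * π ^ (-(vz v a + n * vz v y))) = ac v π res a * ac v π res y ^ n := by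
  have hπ0 := hv.ne_zero_of_val_eq_one hπ
  have hsplit : a * y ^ n * π ^ (-(vz v a + n * vz v y))
      = (a * π ^ (-vz v a)) * (y * π ^ (-vz v y)) ^ n := by
    rw [mul_pow, ← zpow_natCast (π ^ _), ← zpow_mul, neg_add, zpow_add₀ hπ0]
    ring_nf
  have hya := (hv.val_mul_zpow_neg_vz hπ hy).ge
  rw [hsplit, hres.map_mul _ _ (hv.val_mul_zpow_neg_vz hπ ha).ge (hv.nonneg_pow hya n),
    hres.map_pow hv hya]
  rfl

end IsResidue

/-- `v(a i) + q^i α`, the valuation of the term `a i * x^(q^i)` of `φ(x)` when `v(x) = α`. -/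
noncomputable def termVal (q : ℕ) (v : L → WithTop ℤ) (a : ℕ → L) (α : ℚ) (i : ℕ) : ℚ :=
  (vz v (a i) : ℚ) + (q : ℚ) ^ i * α

open scoped Classical in
/-- The polynomial `∑_{i ∈ J(α)} ac(a i) * X^(q^i)` of `Rset`, evaluated at `γ`. -/
noncomputable def residualEval (q : ℕ) (v : L → WithTop ℤ) (π : L) (res : L → k)
    (r₀ r : ℕ) (a : ℕ → L) (α : ℚ) (γ : k) : k :=
  ∑ i ∈ Icc r₀ r, if i ∈ Jset q v r₀ r a α then ac v π res (a i) * γ ^ q ^ i else 0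

section Jset

variable {q r₀ r : ℕ} {v : L → WithTop ℤ} {a : ℕ → L} {α β : ℚ} {i j : ℕ}

lemma termVal_le_of_mem_Jset (hi : i ∈ Jset q v r₀ r a α) (hj₀ : r₀ ≤ j) (hjr : j ≤ r)
    (haj : a j ≠ 0) : termVal q v a α i ≤ termVal q v a α j :=
  hi.2.2.2 j hj₀ hjr haj

lemma mem_Jset_iff_termVal_eq (hi₀ : i ∈ Jset q v r₀ r a α) (hj : j ∈ Icc r₀ r) (haj : a j ≠ 0) :
    j ∈ Jset q v r₀ r a α ↔ termVal q v a α j = termVal q v a α i := by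
  obtain ⟨hj₀, hjr⟩ := mem_Icc.mp hj
  refine ⟨fun hjJ => le_antisymm ?_ (termVal_le_of_mem_Jset hi₀ hj₀ hjr haj), fun h => ?_⟩
  · exact termVal_le_of_mem_Jset hjJ hi₀.1 hi₀.2.1 hi₀.2.2.1
  · exact ⟨hj₀, hjr, haj, fun l hl₀ hlr hal => h.le.trans (termVal_le_of_mem_Jset hi₀ hl₀ hlr hal)⟩

lemma Jset_nonempty (hi₀ : r₀ ≤ i) (hir : i ≤ r) (hai : a i ≠ 0) :
    (Jset q v r₀ r a α).Nonempty := by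
  classical
  obtain ⟨l, hl, hmin⟩ := ((Icc r₀ r).filter (a · ≠ 0)).exists_min_image (termVal q v a α)
    ⟨i, mem_filter.mpr ⟨mem_Icc.mpr ⟨hi₀, hir⟩, hai⟩⟩
  obtain ⟨hlI, hal⟩ := mem_filter.mp hl
  obtain ⟨hl₀, hlr⟩ := mem_Icc.mp hlI
  exact ⟨l, hl₀, hlr, hal, fun j hj₀ hjr haj =>
    hmin j (mem_filter.mpr ⟨mem_Icc.mpr ⟨hj₀, hjr⟩, haj⟩)⟩

lemma mem_Pset_of_mem_Jset (hq : 1 < q) (hi : i ∈ Jset q v r₀ r a α)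
    (hj : j ∈ Jset q v r₀ r a α) (hij : i < j) : α ∈ Pset q v r₀ r a := by
  have heq : termVal q v a α i = termVal q v a α j :=
    le_antisymm (termVal_le_of_mem_Jset hi hj.1 hj.2.1 hj.2.2.1)
      (termVal_le_of_mem_Jset hj hi.1 hi.2.1 hi.2.2.1)
  have hq' : (1 : ℚ) < q := by exact_mod_cast hq
  have hden : (q : ℚ) ^ j - (q : ℚ) ^ i ≠ 0 := sub_ne_zero.mpr (pow_lt_pow_right₀ hq' hij).ne'
  refine Or.inr ⟨i, j, hi.1, hij, hj.2.1, hi.2.2.1, hj.2.2.1, ?_⟩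
  rw [eq_div_iff hden]
  unfold termVal at heq
  linarith

lemma termVal_lt_of_mem_Jset (hq : 0 < q) (hi : i ∈ Jset q v r₀ r a α)
    (hj : j ∈ Jset q v r₀ r a β) (hαβ : α < β) : termVal q v a α i < termVal q v a β j :=
  calc termVal q v a α i ≤ termVal q v a α j := termVal_le_of_mem_Jset hi hj.1 hj.2.1 hj.2.2.1
    _ < termVal q v a β j := by unfold termVal; gcongr

lemma eq_of_mem_Jset_of_termVal_eq (hq : 0 < q) (hi : i ∈ Jset q v r₀ r a α)
    (hj : j ∈ Jset q v r₀ r a β) (h : termVal q v a α i = termVal q v a β j) : α = β := by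
  rcases lt_trichotomy α β with hαβ | hαβ | hαβ
  · exact absurd h (termVal_lt_of_mem_Jset hq hi hj hαβ).ne
  · exact hαβ
  · exact absurd h (termVal_lt_of_mem_Jset hq hj hi hαβ).ne'

end Jset

section Newton

variable {q r₀ r : ℕ} {v : L → WithTop ℤ} {π : L} {res : L → k} {a : ℕ → L} {y : L}

lemma residualEval_ne_zero (hv : IsDVal v) (hres : IsResidue v res) (hπ : v π = 1) (hq : 1 < q)
    (hy : y ≠ 0) (hexc : ¬ Exc q v π res r₀ r a y) (hJ : (Jset q v r₀ r a (vz v y)).Nonempty) :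
    residualEval q v π res r₀ r a (vz v y) (ac v π res y) ≠ 0 := by
  rcases hJ.exists_eq_singleton_or_nontrivial with ⟨i, hJi⟩ | ⟨i, hi, j, hj, hij⟩
  · have hi : i ∈ Jset q v r₀ r a (vz v y) := hJi ▸ rfl
    rw [residualEval, hJi]
    simp only [Set.mem_singleton_iff, sum_ite_eq', mem_Icc, if_pos (And.intro hi.1 hi.2.1)]
    exact mul_ne_zero (hres.ac_ne_zero hv hπ hi.2.2.1) (pow_ne_zero _ (hres.ac_ne_zero hv hπ hy))
  · have hP : (vz v y : ℚ) ∈ Pset q v r₀ r a := by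
      rcases hij.lt_or_gt with h | h
      exacts [mem_Pset_of_mem_Jset hq hi hj h, mem_Pset_of_mem_Jset hq hj hi h]
    exact fun h0 => hexc ⟨hP, Or.inr ⟨hres.ac_ne_zero hv hπ hy, h0⟩⟩

open scoped Classical in
lemma val_nonneg_and_res_term (hv : IsDVal v) (hres : IsResidue v res) (hπ : v π = 1)
    (hy : y ≠ 0) {i₀ i : ℕ} (hi₀ : i₀ ∈ Jset q v r₀ r a (vz v y)) {M : ℤ}
    (hM : (M : ℚ) = termVal q v a (vz v y) i₀) (hi : i ∈ Icc r₀ r) :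
    0 ≤ v (a i * y ^ q ^ i * π ^ (-M)) ∧ res (a i * y ^ q ^ i * π ^ (-M)) =
      if i ∈ Jset q v r₀ r a (vz v y) then ac v π res (a i) * ac v π res y ^ q ^ i else 0 := by
  by_cases hai : a i = 0
  · have hiJ : i ∉ Jset q v r₀ r a (vz v y) := fun h => h.2.2.1 hai
    simp [hai, hv.map_zero, hres.map_zero hv, hiJ]
  set t := a i * y ^ q ^ i * π ^ (-M) with ht
  have ht0 : t ≠ 0 :=
    mul_ne_zero (mul_ne_zero hai (pow_ne_zero _ hy)) (zpow_ne_zero _ (hv.ne_zero_of_val_eq_one hπ))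
  have hvt : (vz v t : ℚ) = termVal q v a (vz v y) i - termVal q v a (vz v y) i₀ := by
    rw [ht, hv.vz_mul_pow_mul_zpow hπ hai hy, ← hM, termVal]
    push_cast
    ring
  have hle := termVal_le_of_mem_Jset hi₀ (mem_Icc.mp hi).1 (mem_Icc.mp hi).2 hai
  have hvt0 : 0 ≤ v t := by
    rw [← hv.coe_vz ht0]
    exact_mod_cast (show (0 : ℚ) ≤ vz v t by linarith)
  refine ⟨hvt0, ?_⟩
  split_ifs with hiJ
  · have hMi : M = vz v (a i) + (q ^ i : ℕ) * vz v y := by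
      have := (mem_Jset_iff_termVal_eq hi₀ hi hai).mp hiJ
      rw [← hM, termVal] at this
      exact_mod_cast this.symm
    rw [ht, hMi]
    exact hres.res_mul_pow_mul_zpow hv hπ hai hy _
  · have hne := mt (mem_Jset_iff_termVal_eq hi₀ hi hai).mpr hiJ
    have hpos : 0 < v t := by
      rw [← hv.coe_vz ht0]
      exact_mod_cast (show (0 : ℚ) < vz v t by rw [hvt]; exact sub_pos.mpr (hle.lt_of_ne' hne))
    exact (hres.eq_zero_iff t hvt0).mpr hpos

lemma val_phiMap_of_not_exc (hv : IsDVal v) (hres : IsResidue v res) (hπ : v π = 1)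
    (hq : 1 < q) (hy : y ≠ 0) (hexc : ¬ Exc q v π res r₀ r a y) {i₀ : ℕ}
    (hi₀ : i₀ ∈ Jset q v r₀ r a (vz v y)) :
    v (phiMap q r₀ r a y) = ((vz v (a i₀) + (q : ℤ) ^ i₀ * vz v y : ℤ) : WithTop ℤ) := by
  set M := vz v (a i₀) + (q : ℤ) ^ i₀ * vz v y
  have hM : (M : ℚ) = termVal q v a (vz v y) i₀ := by push_cast [M, termVal]; rfl
  have hterm := fun i (hi : i ∈ Icc r₀ r) => val_nonneg_and_res_term hv hres hπ hy hi₀ hM hi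
  have hsum : phiMap q r₀ r a y * π ^ (-M) = ∑ i ∈ Icc r₀ r, a i * y ^ q ^ i * π ^ (-M) :=
    sum_mul _ _ _
  refine hres.val_eq_of_res_mul_zpow_ne_zero hv hπ ?_ ?_
  · rw [hsum]
    exact hv.le_sum _ _ fun i hi => (hterm i hi).1
  · rw [hsum, hres.map_sum hv _ _ fun i hi => (hterm i hi).1, sum_congr rfl fun i hi => (hterm i hi).2]
    exact residualEval_ne_zero hv hres hπ hq hy hexc ⟨i₀, hi₀⟩

end Newton

theorem statement5_general
    (p q : ℕ) (hp : p.Prime) (hq : ∃ s : ℕ, 0 < s ∧ q = p ^ s)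
    (v : L → WithTop ℤ) (hv : IsDVal v)
    (π : L) (hπ : v π = 1) (res : L → k) (hres : IsResidue v res)
    (r₀ r : ℕ) (hr₀r : r₀ ≤ r)
    (a : ℕ → L) (har₀ : a r₀ ≠ 0)
    (x x' : L) (hx : x ≠ 0) (hx' : x' ≠ 0)
    (hexc : ¬ Exc q v π res r₀ r a x) (hexc' : ¬ Exc q v π res r₀ r a x')
    (heq : v (phiMap q r₀ r a x) = v (phiMap q r₀ r a x')) :
    v x = v x' := by
  have hq1 : 1 < q := by
    obtain ⟨s, hs, rfl⟩ := hq
    exact Nat.one_lt_pow hs.ne' hp.one_lt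
  obtain ⟨i, hi⟩ := Jset_nonempty (q := q) (v := v) (α := vz v x) le_rfl hr₀r har₀
  obtain ⟨j, hj⟩ := Jset_nonempty (q := q) (v := v) (α := vz v x') le_rfl hr₀r har₀
  rw [val_phiMap_of_not_exc hv hres hπ hq1 hx hexc hi,
    val_phiMap_of_not_exc hv hres hπ hq1 hx' hexc' hj] at heq
  have hvz : (vz v x : ℚ) = vz v x' :=
    eq_of_mem_Jset_of_termVal_eq (by omega) hi hj (by unfold termVal; exact_mod_cast heq)
  rw [← hv.coe_vz hx, ← hv.coe_vz hx', Int.cast_inj.mp hvz]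

/-- Lemma 2.9: if `Exc(x)` and `Exc(x')` both fail and `v(φ(x)) = v(φ(x'))`
(in `ℤ ∪ {∞}`), then `v(x) = v(x')`. -/
theorem statement5
    (p q : ℕ) (hp : p.Prime) (hq : ∃ s : ℕ, 0 < s ∧ q = p ^ s)
    [CharP L p] (F : Subfield L) (hF : Nat.card F = q)
    (v : L → WithTop ℤ) (hv : IsDVal v)
    (π : L) (hπ : v π = 1) (res : L → k) (hres : IsResidue v res)
    (r₀ r : ℕ) (hr1 : 1 ≤ r) (hr₀r : r₀ ≤ r)
    (a : ℕ → L) (har₀ : a r₀ ≠ 0) (har : a r = 1)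
    (x x' : L) (hx : x ≠ 0) (hx' : x' ≠ 0)
    (hexc : ¬ Exc q v π res r₀ r a x) (hexc' : ¬ Exc q v π res r₀ r a x')
    (heq : v (phiMap q r₀ r a x) = v (phiMap q r₀ r a x')) :
    v x = v x' :=
  statement5_general p q hp hq v hv π hπ res hres r₀ r hr₀r a har₀ x x' hx hx' hexc hexc' heq

end Drinfeld
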